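/- arXiv:math/0701001 — 2 statements merged into one kernel-verified Lean document; each statement's English description precedes it below -/
import Mathlib

section
/- Let f(x_1,…,x_n) = u_1x_1 + ⋯ + u_nx_n and g(x_1,…,x_n) = v_1x_1 + ⋯ + v_nx_n be linear forms with integer coefficients. Let {m_i}_{i=1}^∞ be a sequence of pairwise relatively prime integers with m_i ≥ 2 for all i, and for each i let R_{m_i} be a nonempty set of congruence classes in ℤ/m_iℤ. If the partial products ∏_{i=1}^{r} |f(R_{m_i})|/|g(R_{m_i})| tend to 0 as r → ∞, then there is a finite set A of integers such that |f(A)| < |g(A)|. -/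
/-- The image of a finite set `A` (in a commutative ring) under the linear form
`f(x_1,…,x_n) = u_1 x_1 + ⋯ + u_n x_n`. -/
def linFormImage {α : Type*} [CommRing α] [DecidableEq α]
    (n : ℕ) (u : Fin n → α) (A : Finset α) : Finset α :=
  (Fintype.piFinset fun _ : Fin n => A).image fun a => ∑ i, u i * a i

lemma linFormImage_nonempty {α : Type*} [CommRing α] [DecidableEq α]
    (n : ℕ) (c : Fin n → α) {A : Finset α} (hA : A.Nonempty) :
    (linFormImage n c A).Nonempty :=
  Finset.Nonempty.image (Fintype.piFinset_nonempty.2 fun _ => hA) _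

lemma linFormImage_image_hom {F α β : Type*} [CommRing α] [DecidableEq α] [CommRing β]
    [DecidableEq β] [FunLike F α β] [RingHomClass F α β] (n : ℕ) (φ : F) (c : Fin n → α) (A : Finset α) :
    (linFormImage n c A).image φ = linFormImage n (fun t => φ (c t)) (A.image φ) := by
  unfold linFormImage
  rw [Fintype.piFinset_image, Finset.image_image, Finset.image_image]
  congr 1
  funext a
  simp [Function.comp, map_sum, map_mul]

lemma linFormImage_pi {ι : Type*} [Fintype ι] [DecidableEq ι] (M : ι → ℕ)
    (n : ℕ) (c : Fin n → Π i, ZMod (M i)) (R : Π i, Finset (ZMod (M i))) :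
    linFormImage n c (Fintype.piFinset R)
      = Fintype.piFinset (fun i => linFormImage n (fun t => c t i) (R i)) := by
  ext b
  simp only [linFormImage, Finset.mem_image, Fintype.mem_piFinset]
  constructor
  · rintro ⟨a, ha, rfl⟩ i
    exact ⟨fun t => a t i, fun t => ha t i, by simp⟩
  · intro h
    choose a ha hb using h
    exact ⟨fun t i => a i t, fun t i => ha i t, funext fun i => by simpa using hb i⟩

/-- Card of linFormImage over `ZMod M` equals product of component cards, via CRT. -/
lemma linFormImage_card_crt (n : ℕ) (u : Fin n → ℤ) (m : ℕ → ℕ) (r : ℕ)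
    (hm : ∀ i, 2 ≤ m i) (hcop : ∀ i j, i ≠ j → Nat.Coprime (m i) (m j))
    (R : (i : ℕ) → Finset (ZMod (m i)))
    (e : ZMod (∏ i : Fin r, m i) ≃+* Π i : Fin r, ZMod (m i))
    (R' : Finset (ZMod (∏ i : Fin r, m i)))
    (hR' : R'.image e = Fintype.piFinset fun i : Fin r => R i) :
    (linFormImage n (fun t => ((u t : ℤ) : ZMod (∏ i : Fin r, m i))) R').card
      = ∏ i ∈ Finset.range r,
        (linFormImage n (fun t => ((u t : ℤ) : ZMod (m i))) (R i)).card := by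
  have h1 : ((linFormImage n (fun t => ((u t : ℤ) : ZMod (∏ i : Fin r, m i))) R').image
      e).card = (linFormImage n (fun t => ((u t : ℤ) : ZMod (∏ i : Fin r, m i))) R').card :=
    Finset.card_image_of_injective _ e.injective
  rw [← h1, linFormImage_image_hom n e]
  have hc : (fun t => e ((u t : ℤ)))
      = fun t => ((u t : ℤ) : Π i : Fin r, ZMod (m i)) := by
    funext t; exact map_intCast _ _
  rw [hc, hR', linFormImage_pi]
  rw [Fintype.card_piFinset]
  rw [← Fin.prod_univ_eq_prod_range
    (fun i => (linFormImage n (fun t => ((u t : ℤ) : ZMod (m i))) (R i)).card) r]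
  simp [Pi.intCast_apply]

theorem stmt_13 (n : ℕ) (u v : Fin n → ℤ) (m : ℕ → ℕ) (hm : ∀ i, 2 ≤ m i)
    (hcop : ∀ i j, i ≠ j → Nat.Coprime (m i) (m j))
    (R : (i : ℕ) → Finset (ZMod (m i))) (hR : ∀ i, (R i).Nonempty)
    (hprod : Filter.Tendsto
      (fun r => ∏ i ∈ Finset.range r,
        ((linFormImage n (fun t => ((u t : ℤ) : ZMod (m i))) (R i)).card : ℝ) /
          ((linFormImage n (fun t => ((v t : ℤ) : ZMod (m i))) (R i)).card : ℝ))
      Filter.atTop (nhds 0)) :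
    ∃ A : Finset ℤ, (linFormImage n u A).card < (linFormImage n v A).card := by
  classical
  set C : ℕ := ∑ t, (u t).natAbs with hC
  set K : ℕ := 2 * C + 1 with hK
  have hK0 : (0 : ℝ) < 1 / K := by positivity
  obtain ⟨r, hr⟩ := (hprod.eventually (gt_mem_nhds hK0)).exists
  have hfpos : ∀ i, 0 < (linFormImage n (fun t => ((u t : ℤ) : ZMod (m i))) (R i)).card :=
    fun i => (linFormImage_nonempty _ _ (hR i)).card_pos
  have hgpos : ∀ i, 0 < (linFormImage n (fun t => ((v t : ℤ) : ZMod (m i))) (R i)).card :=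
    fun i => (linFormImage_nonempty _ _ (hR i)).card_pos
  -- the key numerical inequality over `range r`
  have hineq : K * ∏ i ∈ Finset.range r,
      (linFormImage n (fun t => ((u t : ℤ) : ZMod (m i))) (R i)).card
      < ∏ i ∈ Finset.range r,
        (linFormImage n (fun t => ((v t : ℤ) : ZMod (m i))) (R i)).card := by
    rw [Finset.prod_div_distrib] at hr
    have hgp : (0 : ℝ) < ∏ i ∈ Finset.range r,
        ((linFormImage n (fun t => ((v t : ℤ) : ZMod (m i))) (R i)).card : ℝ) :=
      Finset.prod_pos fun i _ => by exact_mod_cast hgpos i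
    have hKp : (0 : ℝ) < (K : ℝ) := by positivity
    rw [div_lt_div_iff₀ hgp hKp, one_mul] at hr
    have : (K : ℝ) * ∏ i ∈ Finset.range r,
        ((linFormImage n (fun t => ((u t : ℤ) : ZMod (m i))) (R i)).card : ℝ)
        < ∏ i ∈ Finset.range r,
          ((linFormImage n (fun t => ((v t : ℤ) : ZMod (m i))) (R i)).card : ℝ) := by
      linarith
    exact_mod_cast this
  -- CRT setup
  set M : ℕ := ∏ i : Fin r, m i with hM
  have hMpos : 0 < M := Finset.prod_pos fun i _ => lt_of_lt_of_le two_pos (hm i)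
  haveI : NeZero M := ⟨hMpos.ne'⟩
  have hpw : Pairwise (Function.onFun Nat.Coprime fun i : Fin r => m i) :=
    fun i j hij => hcop _ _ fun h => hij (Fin.val_injective h)
  let e : ZMod M ≃+* Π i : Fin r, ZMod (m i) := ZMod.prodEquivPi (fun i : Fin r => m i) hpw
  set R' : Finset (ZMod M) := (Fintype.piFinset fun i : Fin r => R i).image e.symm with hR'def
  have hR' : R'.image e = Fintype.piFinset fun i : Fin r => R i := by
    rw [hR'def, Finset.image_image]
    have h : (⇑e ∘ ⇑e.symm) = id := by funext x; simp
    rw [h, Finset.image_id]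
  set A : Finset ℤ := R'.image fun z => (z.val : ℤ) with hAdef
  refine ⟨A, ?_⟩
  have hFcrt := linFormImage_card_crt n u m r hm hcop R e R' hR'
  have hGcrt := linFormImage_card_crt n v m r hm hcop R e R' hR'
  have hMZ : (0 : ℤ) < (M : ℤ) := by exact_mod_cast hMpos
  -- A reduces mod M exactly to R'
  have hAR : A.image (Int.cast : ℤ → ZMod M) = R' := by
    rw [hAdef, Finset.image_image]
    have : ((fun x : ℤ => (x : ZMod M)) ∘ fun z : ZMod M => ((z.val : ℕ) : ℤ)) = id := by
      funext z
      simp [Function.comp, ZMod.natCast_val, ZMod.cast_id']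
    rw [this, Finset.image_id]
  -- lower bound for g
  have hhomv := linFormImage_image_hom n (Int.castRingHom (ZMod M)) v A
  rw [show ((Int.castRingHom (ZMod M)) : ℤ → ZMod M) = (Int.cast : ℤ → ZMod M) from rfl,
    hAR] at hhomv
  have hlow : (linFormImage n (fun t => ((v t : ℤ) : ZMod M)) R').card
      ≤ (linFormImage n v A).card := by
    rw [← hhomv]
    exact Finset.card_image_le
  -- bound on the size of elements of f(A)
  have habs : ∀ x ∈ linFormImage n u A, |x| ≤ (C : ℤ) * M := by
    intro x hx
    simp only [linFormImage, Finset.mem_image, Fintype.mem_piFinset] at hx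
    obtain ⟨a, ha, rfl⟩ := hx
    calc |∑ t, u t * a t| ≤ ∑ t, |u t * a t| := Finset.abs_sum_le_sum_abs _ _
      _ ≤ ∑ t, |u t| * M := by
          refine Finset.sum_le_sum fun t _ => ?_
          rw [abs_mul]
          refine mul_le_mul_of_nonneg_left ?_ (abs_nonneg _)
          have h := ha t
          rw [hAdef, Finset.mem_image] at h
          obtain ⟨z, _, hz⟩ := h
          rw [← hz, abs_of_nonneg (Int.natCast_nonneg _)]
          exact_mod_cast (ZMod.val_lt z).le
      _ = (C : ℤ) * M := by
          rw [← Finset.sum_mul, hC]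
          push_cast [Int.natCast_natAbs]
          ring
  -- membership of casts
  have hhomu := linFormImage_image_hom n (Int.castRingHom (ZMod M)) u A
  rw [show ((Int.castRingHom (ZMod M)) : ℤ → ZMod M) = (Int.cast : ℤ → ZMod M) from rfl,
    hAR] at hhomu
  have hcastmem : ∀ x ∈ linFormImage n u A,
      ((x : ℤ) : ZMod M) ∈ linFormImage n (fun t => ((u t : ℤ) : ZMod M)) R' := by
    intro x hx
    have h := Finset.mem_image_of_mem (Int.cast : ℤ → ZMod M) hx
    rw [hhomu] at h
    exact h
  -- upper bound for f
  have hup : (linFormImage n u A).card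
      ≤ (linFormImage n (fun t => ((u t : ℤ) : ZMod M)) R').card * K := by
    have hcard : ((linFormImage n (fun t => ((u t : ℤ) : ZMod M)) R')
        ×ˢ Finset.Icc (0 : ℤ) (2 * C)).card
        = (linFormImage n (fun t => ((u t : ℤ) : ZMod M)) R').card * K := by
      rw [Finset.card_product]
      congr 1
      rw [Int.card_Icc]
      omega
    rw [← hcard]
    refine Finset.card_le_card_of_injOn
      (fun x => (((x : ℤ) : ZMod M), (x + (C : ℤ) * M) / M)) ?_ ?_
    · intro x hx
      rw [Finset.mem_coe, Finset.mem_product]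
      have hb := abs_le.1 (habs x hx)
      refine ⟨hcastmem x hx, Finset.mem_Icc.2 ⟨Int.ediv_nonneg (by linarith [hb.1]) hMZ.le, ?_⟩⟩
      have h1 : x + (C : ℤ) * M ≤ (2 * C) * M := by push_cast; linarith [hb.2]
      calc (x + (C : ℤ) * M) / M ≤ ((2 * C : ℤ) * M) / M := Int.ediv_le_ediv hMZ h1
        _ = 2 * C := Int.mul_ediv_cancel _ hMZ.ne'
    · intro x hx y hy hxy
      simp only [Prod.mk.injEq] at hxy
      obtain ⟨h1, h2⟩ := hxy
      have hmod : x ≡ y [ZMOD (M : ℕ)] := (ZMod.intCast_eq_intCast_iff _ _ _).1 h1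
      have hmod' : (x + (C : ℤ) * M) % M = (y + (C : ℤ) * M) % M :=
        hmod.add_right ((C : ℤ) * M)
      have ex := Int.mul_ediv_add_emod (x + (C : ℤ) * M) M
      have ey := Int.mul_ediv_add_emod (y + (C : ℤ) * M) M
      rw [h2, hmod'] at ex
      linarith
  calc (linFormImage n u A).card
      ≤ (linFormImage n (fun t => ((u t : ℤ) : ZMod M)) R').card * K := hup
    _ = K * ∏ i ∈ Finset.range r,
        (linFormImage n (fun t => ((u t : ℤ) : ZMod (m i))) (R i)).card := by
        rw [hFcrt, mul_comm]
    _ < ∏ i ∈ Finset.range r,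
        (linFormImage n (fun t => ((v t : ℤ) : ZMod (m i))) (R i)).card := hineq
    _ = (linFormImage n (fun t => ((v t : ℤ) : ZMod M)) R').card := hGcrt.symm
    _ ≤ (linFormImage n v A).card := hlow
end

section
/- Let f(x_1,…,x_n) = u_1x_1 + ⋯ + u_nx_n and g(x_1,…,x_n) = v_1x_1 + ⋯ + v_nx_n be linear forms with integer coefficients. Let {m_i}_{i=1}^∞ be a sequence of pairwise relatively prime positive integers with m_i ≥ 2 for all i and Σ_{i=1}^∞ 1/m_i = ∞. If for every i there exists a nonempty set R_{m_i} of congruence classes in ℤ/m_iℤ such that f(R_{m_i}) ≠ ℤ/m_iℤ and g(R_{m_i}) = ℤ/m_iℤ, then there is a finite set A of integers such that |f(A)| < |g(A)|. -/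
lemma aux_exists_r (m : ℕ → ℕ) (hm : ∀ i, 2 ≤ m i)
    (hdiv : Filter.Tendsto (fun r => ∑ i ∈ Finset.range r, (1 : ℝ) / (m i))
      Filter.atTop Filter.atTop) (K : ℕ) :
    ∃ r, K * ∏ i ∈ Finset.range r, (m i - 1) < ∏ i ∈ Finset.range r, m i := by
  have hfac : ∀ i, (0:ℝ) ≤ 1 - 1/(m i) := by
    intro i
    have h2 : (2:ℝ) ≤ (m i : ℝ) := by exact_mod_cast hm i
    have : 1/(m i:ℝ) ≤ 1/2 := by
      apply one_div_le_one_div_of_le <;> linarith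
    linarith
  -- the product of (1 - 1/m i) tends to 0
  have hP : Filter.Tendsto (fun r => ∏ i ∈ Finset.range r, (1 - 1/(m i) : ℝ))
      Filter.atTop (nhds 0) := by
    have hle : ∀ r, ∏ i ∈ Finset.range r, (1 - 1/(m i) : ℝ)
        ≤ Real.exp (-(∑ i ∈ Finset.range r, (1:ℝ)/(m i))) := by
      intro r
      rw [← Finset.sum_neg_distrib, Real.exp_sum]
      apply Finset.prod_le_prod (fun i _ => hfac i)
      intro i _
      have := Real.add_one_le_exp (-(1/(m i):ℝ))
      linarith
    have hexp : Filter.Tendsto (fun r => Real.exp (-(∑ i ∈ Finset.range r, (1:ℝ)/(m i))))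
        Filter.atTop (nhds 0) :=
      Real.tendsto_exp_atBot.comp (Filter.tendsto_neg_atBot_iff.mpr hdiv)
    exact squeeze_zero (fun r => Finset.prod_nonneg fun i _ => hfac i) hle hexp
  have hev : ∃ r, ∏ i ∈ Finset.range r, (1 - 1/(m i) : ℝ) < 1/(K+1) := by
    have h1 : (0:ℝ) < 1/(K+1) := by positivity
    exact (hP.eventually_lt_const h1).exists
  obtain ⟨r, hr⟩ := hev
  refine ⟨r, ?_⟩
  -- translate to ℝ
  have hcast : ((∏ i ∈ Finset.range r, (m i - 1) : ℕ) : ℝ)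
      = (∏ i ∈ Finset.range r, (m i : ℝ)) * ∏ i ∈ Finset.range r, (1 - 1/(m i) : ℝ) := by
    rw [← Finset.prod_mul_distrib]
    push_cast
    apply Finset.prod_congr rfl
    intro i _
    have h2 : 2 ≤ m i := hm i
    have h0 : (m i : ℝ) ≠ 0 := by positivity
    rw [Nat.cast_sub (by omega), Nat.cast_one]
    field_simp
  have hMpos : (0:ℝ) < ∏ i ∈ Finset.range r, (m i : ℝ) :=
    Finset.prod_pos fun i _ => by have := hm i; positivity
  have : (K : ℝ) * (∏ i ∈ Finset.range r, (m i - 1) : ℕ) < ∏ i ∈ Finset.range r, (m i : ℝ) := by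
    rw [hcast]
    calc (K:ℝ) * ((∏ i ∈ Finset.range r, (m i : ℝ)) * ∏ i ∈ Finset.range r, (1 - 1/(m i) : ℝ))
        ≤ (K:ℝ) * ((∏ i ∈ Finset.range r, (m i : ℝ)) * (1/(K+1))) := by
          apply mul_le_mul_of_nonneg_left _ (by positivity)
          exact mul_le_mul_of_nonneg_left hr.le hMpos.le
      _ < ∏ i ∈ Finset.range r, (m i : ℝ) := by
          rw [mul_comm ((∏ i ∈ Finset.range r, (m i : ℝ))) _, ← mul_assoc]
          have hK : (K:ℝ) * (1/(K+1)) < 1 := by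
            rw [mul_one_div, div_lt_one (by positivity)]
            linarith
          nlinarith
  exact_mod_cast this

theorem stmt_14 (n : ℕ) (u v : Fin n → ℤ) (m : ℕ → ℕ) (hm : ∀ i, 2 ≤ m i)
    (hcop : ∀ i j, i ≠ j → Nat.Coprime (m i) (m j))
    (hdiv : Filter.Tendsto (fun r => ∑ i ∈ Finset.range r, (1 : ℝ) / (m i))
      Filter.atTop Filter.atTop)
    (R : (i : ℕ) → Finset (ZMod (m i))) (hR : ∀ i, (R i).Nonempty)
    (hf : ∀ i, ∃ x : ZMod (m i),
      x ∉ linFormImage n (fun t => ((u t : ℤ) : ZMod (m i))) (R i))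
    (hg : ∀ i, ∀ x : ZMod (m i),
      x ∈ linFormImage n (fun t => ((v t : ℤ) : ZMod (m i))) (R i)) :
    ∃ A : Finset ℤ, (linFormImage n u A).card < (linFormImage n v A).card := by
  classical
  set U : ℕ := 1 + ∑ t, (u t).natAbs with hU
  obtain ⟨r, hr⟩ := aux_exists_r m hm hdiv (2 * U)
  set M : ℕ := ∏ i : Fin r, m (i : ℕ) with hMdef
  have hMeq : M = ∏ i ∈ Finset.range r, m i := Fin.prod_univ_eq_prod_range _ r
  have hMpos : 0 < M := Finset.prod_pos fun i _ => by have := hm i; omega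
  haveI : NeZero M := ⟨hMpos.ne'⟩
  have hcopF : Pairwise (Function.onFun Nat.Coprime fun i : Fin r => m (i : ℕ)) :=
    fun i j hij => hcop i j (fun h => hij (Fin.val_injective h))
  let e : ZMod M ≃+* ∀ i : Fin r, ZMod (m (i : ℕ)) := ZMod.prodEquivPi _ hcopF
  have hcastE : ∀ (b : ℤ) (i : Fin r), e (b : ZMod M) i = (b : ZMod (m (i : ℕ))) := by
    intro b i
    rw [map_intCast]
    simp
  -- the set A
  set A : Finset ℤ := (Finset.Ico (0 : ℤ) (M : ℤ)).filter
    (fun a => ∀ i : Fin r, ((a : ZMod (m (i : ℕ))) ∈ R (i : ℕ))) with hAdef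
  have hAmem : ∀ a ∈ A, (0 ≤ a ∧ a < (M : ℤ)) ∧
      ∀ i : Fin r, ((a : ZMod (m (i : ℕ))) ∈ R (i : ℕ)) := by
    intro a ha
    rw [hAdef, Finset.mem_filter, Finset.mem_Ico] at ha
    exact ha
  -- surjectivity of reduction mod M on the g-image
  have hsurj : ∀ x : ZMod M, ∃ b ∈ linFormImage n v A, ((b : ZMod M) = x) := by
    intro x
    have h1 : ∀ i : Fin r, ∃ ρ : Fin n → ZMod (m (i : ℕ)),
        (∀ t, ρ t ∈ R (i : ℕ)) ∧ ∑ t, ((v t : ℤ) : ZMod (m (i : ℕ))) * ρ t = e x i := by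
      intro i
      have := hg i (e x i)
      rw [linFormImage, Finset.mem_image] at this
      obtain ⟨ρ, hρ, hsum⟩ := this
      exact ⟨ρ, fun t => (Fintype.mem_piFinset.mp hρ) t, hsum⟩
    choose ρ hρmem hρsum using h1
    set c : Fin n → ZMod M := fun t => e.symm (fun i => ρ i t) with hc
    set a : Fin n → ℤ := fun t => ((c t).val : ℤ) with haDef
    have hresid : ∀ (t : Fin n) (i : Fin r), ((a t : ZMod (m (i : ℕ)))) = ρ i t := by
      intro t i
      have h2 : ((a t : ℤ) : ZMod M) = c t := by
        rw [haDef]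
        push_cast
        exact ZMod.natCast_rightInverse (c t)
      rw [← hcastE (a t) i, h2, hc]
      simp
    have hamem : ∀ t, a t ∈ A := by
      intro t
      rw [hAdef, Finset.mem_filter]
      refine ⟨Finset.mem_Ico.mpr ⟨Int.natCast_nonneg _, by show ((c t).val : ℤ) < (M:ℤ); exact_mod_cast ZMod.val_lt (c t)⟩, ?_⟩
      intro i
      rw [hresid t i]
      exact hρmem i t
    refine ⟨∑ t, v t * a t, ?_, ?_⟩
    · rw [linFormImage, Finset.mem_image]
      exact ⟨a, Fintype.mem_piFinset.mpr hamem, rfl⟩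
    · apply e.injective
      funext i
      rw [hcastE]
      push_cast
      rw [← hρsum i]
      exact Finset.sum_congr rfl (fun t _ => by rw [hresid t i])
  -- |g(A)| ≥ M
  have hgcard : M ≤ (linFormImage n v A).card := by
    have hsurjOn : Set.SurjOn (fun b : ℤ => (b : ZMod M))
        (linFormImage n v A) (Finset.univ : Finset (ZMod M)) := by
      intro x _
      obtain ⟨b, hb, hbx⟩ := hsurj x
      exact ⟨b, hb, hbx⟩
    have := Finset.card_le_card_of_surjOn _ hsurjOn
    rwa [Finset.card_univ, ZMod.card] at this
  -- f-side
  set S : (i : Fin r) → Finset (ZMod (m (i : ℕ))) :=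
    fun i => linFormImage n (fun t => ((u t : ℤ) : ZMod (m (i : ℕ)))) (R (i : ℕ)) with hSdef
  have hScard : ∀ i : Fin r, (S i).card ≤ m (i : ℕ) - 1 := by
    intro i
    haveI : NeZero (m (i : ℕ)) := ⟨by have := hm (i : ℕ); omega⟩
    obtain ⟨x, hx⟩ := hf (i : ℕ)
    have hx' : x ∉ S i := hx
    have hss : S i ⊂ Finset.univ := Finset.ssubset_univ_iff.mpr
      (fun h => hx' (h ▸ Finset.mem_univ x))
    have hcd := Finset.card_lt_card hss
    rw [Finset.card_univ, ZMod.card] at hcd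
    omega
  -- every element of f(A) has residues in S i and is bounded
  have hfb : ∀ b ∈ linFormImage n u A,
      (0 ≤ b + (U : ℤ) * M ∧ b + (U : ℤ) * M < 2 * U * M) ∧
      ∀ i : Fin r, ((b : ZMod (m (i : ℕ))) ∈ S i) := by
    intro b hb
    rw [linFormImage, Finset.mem_image] at hb
    obtain ⟨a, ha, rfl⟩ := hb
    rw [Fintype.mem_piFinset] at ha
    constructor
    · have habs : |∑ t, u t * a t| ≤ ((U : ℤ) - 1) * ((M : ℤ) - 1) := by
        calc |∑ t, u t * a t| ≤ ∑ t, |u t * a t| := Finset.abs_sum_le_sum_abs _ _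
          _ ≤ ∑ t, ((u t).natAbs : ℤ) * ((M : ℤ) - 1) := by
              apply Finset.sum_le_sum
              intro t _
              rw [abs_mul, Int.abs_eq_natAbs]
              apply mul_le_mul_of_nonneg_left _ (Int.natCast_nonneg _)
              obtain ⟨⟨h1, h2⟩, _⟩ := hAmem (a t) (ha t)
              rw [abs_of_nonneg h1]; omega
          _ = ((U : ℤ) - 1) * ((M : ℤ) - 1) := by
              rw [← Finset.sum_mul, hU]; push_cast; ring
      have hM1 : (1 : ℤ) ≤ (M : ℤ) := by exact_mod_cast hMpos
      have hU1 : (1 : ℤ) ≤ (U : ℤ) := by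
        have h1 : 1 ≤ U := by rw [hU]; omega
        exact_mod_cast h1
      rw [abs_le] at habs
      constructor <;> nlinarith [habs.1, habs.2]
    · intro i
      rw [hSdef]
      show _ ∈ linFormImage n (fun t => ((u t : ℤ) : ZMod (m (i : ℕ)))) (R (i : ℕ))
      rw [linFormImage, Finset.mem_image]
      refine ⟨fun t => ((a t : ℤ) : ZMod (m (i : ℕ))), ?_, by push_cast; rfl⟩
      rw [Fintype.mem_piFinset]
      intro t
      exact (hAmem (a t) (ha t)).2 i
  -- inject f(A) into Ico 0 (2U) × ∏ S i
  have hfcard : (linFormImage n u A).card ≤ 2 * U * ∏ i : Fin r, (S i).card := by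
    have hinj : Set.InjOn
        (fun b : ℤ => (((b + (U : ℤ) * M) / (M : ℤ)), fun i : Fin r => (b : ZMod (m (i : ℕ)))))
        (linFormImage n u A) := by
      intro b hb b' hb' hbb
      obtain ⟨⟨hb1, hb2⟩, _⟩ := hfb b hb
      obtain ⟨⟨hb1', hb2'⟩, _⟩ := hfb b' hb'
      have hq : (b + (U : ℤ) * M) / (M : ℤ) = (b' + (U : ℤ) * M) / (M : ℤ) :=
        congrArg Prod.fst hbb
      have hres : ∀ i : Fin r, (b : ZMod (m (i : ℕ))) = (b' : ZMod (m (i : ℕ))) :=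
        fun i => congrFun (congrArg Prod.snd hbb) i
      have hmodM : (b : ZMod M) = (b' : ZMod M) := by
        apply e.injective
        funext i
        rw [hcastE, hcastE]
        exact hres i
      have hmod : (b + (U : ℤ) * M) % (M : ℤ) = (b' + (U : ℤ) * M) % (M : ℤ) :=
        Int.ModEq.add_right _ ((ZMod.intCast_eq_intCast_iff _ _ _).mp hmodM)
      have e1 := Int.mul_ediv_add_emod (b + (U : ℤ) * M) (M : ℤ)
      have e2 := Int.mul_ediv_add_emod (b' + (U : ℤ) * M) (M : ℤ)
      rw [hq, hmod] at e1
      linarith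
    have hmaps : ∀ b ∈ linFormImage n u A,
        (((b + (U : ℤ) * M) / (M : ℤ)), fun i : Fin r => (b : ZMod (m (i : ℕ))))
          ∈ (Finset.Ico (0 : ℤ) (2 * U : ℤ)) ×ˢ Fintype.piFinset S := by
      intro b hb
      obtain ⟨⟨hb1, hb2⟩, hbres⟩ := hfb b hb
      rw [Finset.mem_product]
      constructor
      · rw [Finset.mem_Ico]
        have hMZ : (0 : ℤ) < (M : ℤ) := by exact_mod_cast hMpos
        exact ⟨Int.ediv_nonneg hb1 hMZ.le, Int.ediv_lt_of_lt_mul hMZ hb2⟩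
      · rw [Fintype.mem_piFinset]
        exact hbres
    calc (linFormImage n u A).card
        ≤ ((Finset.Ico (0 : ℤ) (2 * U : ℤ)) ×ˢ Fintype.piFinset S).card :=
          Finset.card_le_card_of_injOn _ hmaps hinj
      _ = 2 * U * ∏ i : Fin r, (S i).card := by
          rw [Finset.card_product, Int.card_Ico, Fintype.card_piFinset]
          congr 1
  refine ⟨A, ?_⟩
  calc (linFormImage n u A).card ≤ 2 * U * ∏ i : Fin r, (S i).card := hfcard
    _ ≤ 2 * U * ∏ i : Fin r, (m (i : ℕ) - 1) := by
        apply Nat.mul_le_mul_left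
        exact Finset.prod_le_prod' (fun i _ => hScard i)
    _ = 2 * U * ∏ i ∈ Finset.range r, (m i - 1) := by
        rw [Fin.prod_univ_eq_prod_range (fun i => m i - 1) r]
    _ < ∏ i ∈ Finset.range r, m i := hr
    _ = M := hMeq.symm
    _ ≤ (linFormImage n v A).card := hgcard
end
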